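/- For α ∈ (0,1), the map y ↦ ∫_ℝ g(x) K(y; dx) is continuous on ℝ for every continuous g : ℝ → ℝ satisfying |g(x)| ≤ M|x| for some M > 0. -/

import Mathlib

open MeasureTheory Real Set Filter Topology

/-!
Substituting x = (1 - y) u turns the integral into
(1 - y)^{-α} ∫₀¹ g((1 - y) u) (1 - u)^{α-1} α u^{-α-1} du, an integral over a fixed interval
whose integrand depends continuously on t = 1 - y > 0. Since |g x| ≤ M |x|, the integrand is
dominated by M t^{1-α} α u^{-α} (1 - u)^{α-1}, which is integrable (a Beta density) and tends
to 0 as t → 0⁺ because α < 1. Dominated convergence then gives continuity in t ∈ [0, ∞), and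
I y is this function evaluated at t = max (1 - y) 0, since the integrand vanishes at t = 0.
-/

theorem integrableOn_rpow_mul_one_sub_rpow {p q : ℝ} (hp : -1 < p) (hq : -1 < q) :
    IntegrableOn (fun u : ℝ => u ^ p * (1 - u) ^ q) (Ioo 0 1) := by
  have h := Complex.betaIntegral_convergent (u := p + 1) (v := q + 1)
    (by simp; linarith) (by simp; linarith)
  rw [intervalIntegrable_iff_integrableOn_Ioo_of_le zero_le_one] at h
  refine IntegrableOn.congr_fun h.norm (fun u hu => ?_) measurableSet_Ioo
  rw [norm_mul, add_sub_cancel_right, add_sub_cancel_right,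
    Complex.norm_cpow_eq_rpow_re_of_pos hu.1, ← Complex.ofReal_one, ← Complex.ofReal_sub,
    Complex.norm_cpow_eq_rpow_re_of_pos (sub_pos.2 hu.2)]
  simp

theorem setIntegral_Ioo_zero_eq_mul_setIntegral_comp_mul (f : ℝ → ℝ) {c : ℝ} (hc : 0 < c) :
    ∫ x in Ioo 0 c, f x = c * ∫ u in Ioo 0 1, f (c * u) := by
  rw [← integral_Ioc_eq_integral_Ioo, ← intervalIntegral.integral_of_le hc.le,
    ← integral_Ioc_eq_integral_Ioo, ← intervalIntegral.integral_of_le zero_le_one,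
    intervalIntegral.integral_comp_mul_left _ hc.ne', mul_zero, mul_one, smul_eq_mul,
    mul_inv_cancel_left₀ hc.ne']

/-- The integrand after the substitution x = t u; the kernel K(y; ·) corresponds to t = 1 - y. -/
noncomputable def rescaledIntegrand (α : ℝ) (g : ℝ → ℝ) (t u : ℝ) : ℝ :=
  t ^ (-α) * g (t * u) * ((1 - u) ^ (α - 1) * (α * u ^ (-α - 1)))

theorem rescaledIntegrand_zero_left {α : ℝ} (hα : α ≠ 0) (g : ℝ → ℝ) (u : ℝ) :
    rescaledIntegrand α g 0 u = 0 := by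
  simp [rescaledIntegrand, zero_rpow (neg_ne_zero.2 hα)]

theorem integral_kernel_eq_integral_rescaledIntegrand (α : ℝ) (g : ℝ → ℝ) {c : ℝ} (hc : 0 < c) :
    ∫ x in Ioo 0 c, g x * ((1 - x / c) ^ (α - 1) * (α * x ^ (-α - 1)))
      = ∫ u in Ioo 0 1, rescaledIntegrand α g c u := by
  rw [setIntegral_Ioo_zero_eq_mul_setIntegral_comp_mul _ hc, ← integral_const_mul]
  refine setIntegral_congr_fun measurableSet_Ioo fun u hu => ?_
  have hscale : c * (c * u) ^ (-α - 1) = c ^ (-α) * u ^ (-α - 1) := by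
    rw [mul_rpow hc.le hu.1.le, ← mul_assoc, mul_comm c, ← rpow_add_one hc.ne', sub_add_cancel]
  simp only [rescaledIntegrand, mul_div_cancel_left₀ u hc.ne']
  linear_combination (g (c * u) * (1 - u) ^ (α - 1) * α) * hscale

theorem abs_rescaledIntegrand_le {α M t u : ℝ} (hα : 0 ≤ α) {g : ℝ → ℝ}
    (hgb : ∀ x, |g x| ≤ M * |x|) (ht : 0 ≤ t) (hu : u ∈ Ioo 0 1) :
    |rescaledIntegrand α g t u| ≤ M * t ^ (1 - α) * (α * u ^ (-α) * (1 - u) ^ (α - 1)) := by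
  obtain ⟨hu0, hu1⟩ := hu
  have hM : 0 ≤ M := by simpa using (abs_nonneg _).trans (hgb 1)
  have hw : 0 ≤ (1 - u) ^ (α - 1) * (α * u ^ (-α - 1)) := by positivity
  have ht' : t * t ^ (-α) ≤ t ^ (1 - α) := by
    rcases ht.eq_or_lt with rfl | ht
    · simpa using rpow_nonneg le_rfl (1 - α)
    · rw [sub_eq_add_neg, rpow_add ht, rpow_one]
  have hu' : u * u ^ (-α - 1) = u ^ (-α) := by
    rw [mul_comm, ← rpow_add_one hu0.ne', sub_add_cancel]
  calc |rescaledIntegrand α g t u|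
      = t ^ (-α) * |g (t * u)| * ((1 - u) ^ (α - 1) * (α * u ^ (-α - 1))) := by
        rw [rescaledIntegrand, abs_mul, abs_mul, abs_of_nonneg (rpow_nonneg ht _), abs_of_nonneg hw]
    _ ≤ t ^ (-α) * (M * (t * u)) * ((1 - u) ^ (α - 1) * (α * u ^ (-α - 1))) := by
        gcongr
        simpa [abs_of_nonneg (mul_nonneg ht hu0.le)] using hgb (t * u)
    _ = M * (t * t ^ (-α)) * (α * (u * u ^ (-α - 1)) * (1 - u) ^ (α - 1)) := by ring
    _ ≤ M * t ^ (1 - α) * (α * u ^ (-α) * (1 - u) ^ (α - 1)) := by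
        rw [hu']
        gcongr

theorem continuousOn_rescaledIntegrand {α M u : ℝ} (hα : α ∈ Ioo 0 1) {g : ℝ → ℝ}
    (hg : Continuous g) (hgb : ∀ x, |g x| ≤ M * |x|) (hu : u ∈ Ioo 0 1) :
    ContinuousOn (fun t => rescaledIntegrand α g t u) (Ici 0) := by
  intro t ht
  rcases (mem_Ici.1 ht).eq_or_lt with rfl | ht0
  · have hbound : Tendsto (fun t => M * t ^ (1 - α) * (α * u ^ (-α) * (1 - u) ^ (α - 1)))
        (𝓝[Ici 0] 0) (𝓝 0) := by
      have hpow : ContinuousAt (fun t : ℝ => t ^ (1 - α)) 0 :=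
        continuousAt_rpow_const _ _ (Or.inr (by linarith [hα.2]))
      refine tendsto_nhdsWithin_of_tendsto_nhds ?_
      simpa [zero_rpow (by linarith [hα.2] : 1 - α ≠ 0)] using
        ((hpow.const_mul M).mul_const (α * u ^ (-α) * (1 - u) ^ (α - 1))).tendsto
    rw [ContinuousWithinAt, rescaledIntegrand_zero_left hα.1.ne']
    exact squeeze_zero_norm' (eventually_nhdsWithin_of_forall fun t ht =>
      abs_rescaledIntegrand_le hα.1.le hgb ht hu) hbound
  · have hpow : ContinuousAt (fun t : ℝ => t ^ (-α)) t :=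
      continuousAt_rpow_const _ _ (Or.inl ht0.ne')
    exact ((hpow.mul (hg.comp (continuous_mul_const u)).continuousAt).mul
      continuousAt_const).continuousWithinAt

theorem continuousOn_integral_rescaledIntegrand {α M : ℝ} (hα : α ∈ Ioo 0 1) {g : ℝ → ℝ}
    (hg : Continuous g) (hgb : ∀ x, |g x| ≤ M * |x|) :
    ContinuousOn (fun t => ∫ u in Ioo 0 1, rescaledIntegrand α g t u) (Ici 0) := by
  intro t₀ ht₀
  have hM : 0 ≤ M := by simpa using (abs_nonneg _).trans (hgb 1)
  have hweight := (integrableOn_rpow_mul_one_sub_rpow (p := -α) (q := α - 1)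
    (by linarith [hα.2]) (by linarith [hα.1])).const_mul (M * (t₀ + 1) ^ (1 - α) * α)
  refine continuousWithinAt_of_dominated
    (bound := fun u => M * (t₀ + 1) ^ (1 - α) * (α * u ^ (-α) * (1 - u) ^ (α - 1))) ?_ ?_ ?_ ?_
  · refine Eventually.of_forall fun t => Measurable.aestronglyMeasurable ?_
    unfold rescaledIntegrand
    fun_prop
  · filter_upwards [self_mem_nhdsWithin, nhdsWithin_le_nhds (Iio_mem_nhds (lt_add_one t₀))]
      with t (ht : 0 ≤ t) (ht' : t < t₀ + 1)
    filter_upwards [ae_restrict_mem measurableSet_Ioo] with u hu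
    refine (abs_rescaledIntegrand_le hα.1.le hgb ht hu).trans ?_
    have hw : 0 ≤ α * u ^ (-α) * (1 - u) ^ (α - 1) :=
      mul_nonneg (mul_nonneg hα.1.le (rpow_nonneg hu.1.le _)) (rpow_nonneg (by linarith [hu.2]) _)
    gcongr
    linarith [hα.2]
  · exact hweight.congr (Eventually.of_forall fun u => by ring)
  · filter_upwards [ae_restrict_mem measurableSet_Ioo] with u hu
      using continuousOn_rescaledIntegrand hα hg hgb hu t₀ ht₀

theorem stmt_6_general (α M : ℝ) (hα : α ∈ Set.Ioo (0:ℝ) 1)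
    (g : ℝ → ℝ) (hg : Continuous g) (hgb : ∀ x, |g x| ≤ M * |x|)
    (I : ℝ → ℝ)
    (hI : ∀ y, I y = if y < 1 then
        ∫ x in Set.Ioo (0:ℝ) (1 - y), g x * ((1 - x / (1 - y)) ^ (α - 1) * (α * x ^ (-α - 1)))
      else 0) :
    Continuous I := by
  have hI' : I = fun y => ∫ u in Ioo 0 1, rescaledIntegrand α g (max (1 - y) 0) u := by
    funext y
    rw [hI]
    split_ifs with hy
    · rw [max_eq_left (by linarith),
        integral_kernel_eq_integral_rescaledIntegrand α g (by linarith)]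
    · simp only [max_eq_right (by linarith : 1 - y ≤ 0),
        rescaledIntegrand_zero_left hα.1.ne', integral_zero]
  rw [hI']
  exact (continuousOn_integral_rescaledIntegrand hα hg hgb).comp_continuous (by fun_prop)
    fun y => mem_Ici.2 (le_max_right _ _)

theorem stmt_6 (α M : ℝ) (hα : α ∈ Set.Ioo (0:ℝ) 1) (hM : 0 < M)
    (g : ℝ → ℝ) (hg : Continuous g) (hgb : ∀ x, |g x| ≤ M * |x|)
    (I : ℝ → ℝ)
    (hI : ∀ y, I y = if y < 1 then
        ∫ x in Set.Ioo (0:ℝ) (1 - y), g x * ((1 - x / (1 - y)) ^ (α - 1) * (α * x ^ (-α - 1)))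
      else 0) :
    Continuous I :=
  stmt_6_general α M hα g hg hgb I hI
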